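/- Let G be a group and ν(G) Rocco's construction on G. For every integer r ≥ 3, for any two tuples ε = (ε₁,…,ε_r) and δ = (δ₁,…,δ_r) in {1, φ}^r, each of which is neither the constant tuple (1,…,1) nor the constant tuple (φ,…,φ), and for all g₁,…,g_r ∈ G, the left-normed commutators satisfy [g₁^{ε₁}, …, g_r^{ε_r}] = [g₁^{δ₁}, …, g_r^{δ_r}] in ν(G). -/

import Mathlib

/-!
Write `[a, b^φ]` for `cm (ν₁ G a) (ν₂ G b)`. The defining relations say that on the subgroup
`[G, G^φ]` generated by these elements, conjugation by `g^φ` agrees with conjugation by `g`, and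
conjugation by `g` permutes the generators. Hence `[G, G^φ]` is normal and conjugation on it
factors through the projection `ν(G) → G` identifying the two copies. So as soon as a left-normed
commutator has entered `[G, G^φ]`, the decorations of its remaining entries are irrelevant.

A mixed decoration of length `r ≥ 3` therefore reduces to the canonical one `(1, φ, 1, …, 1)`
once the first change of decoration is moved to position two. For decorations starting with `1`
this is `[x, y, z^φ] = [x, y^φ, z]`, applied along the constant prefix. Decorations starting with
`φ` are the images of those starting with `1` under the automorphism of `ν(G)` exchanging `G` and
`G^φ`, which fixes `[x, y^φ, z]` because `[x, y^φ][y, x^φ]` is invariant under conjugation.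
-/

/-- The paper's commutator convention: `[x, y] = x⁻¹ * y⁻¹ * x * y`. -/
def cm {G : Type*} [Group G] (x y : G) : G := x⁻¹ * y⁻¹ * x * y

/-- Conjugation convention: `x ^ y = y⁻¹ * x * y`. -/
def cj {G : Type*} [Group G] (x y : G) : G := y⁻¹ * x * y

namespace Rocco

variable (G : Type*) [Group G]

/-- The defining relators of Rocco's group `ν(G)`, inside the free product `G ∗ G`
(the second factor playing the role of the isomorphic copy `G^φ`). -/
def rels : Set (Monoid.Coprod G G) :=
  {x | ∃ g₁ g₂ g₃ : G,
    x = cj (cm (Monoid.Coprod.inl g₁) (Monoid.Coprod.inr g₂)) (Monoid.Coprod.inl g₃) *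
        (cm (Monoid.Coprod.inl (cj g₁ g₃)) (Monoid.Coprod.inr (cj g₂ g₃)))⁻¹ ∨
    x = cj (cm (Monoid.Coprod.inl g₁) (Monoid.Coprod.inr g₂)) (Monoid.Coprod.inl g₃) *
        (cj (cm (Monoid.Coprod.inl g₁) (Monoid.Coprod.inr g₂)) (Monoid.Coprod.inr g₃))⁻¹}

/-- Rocco's construction `ν(G)`. -/
abbrev nu := Monoid.Coprod G G ⧸ Subgroup.normalClosure (rels G)

/-- The canonical image of `G` in `ν(G)`. -/
def ν₁ : G →* nu G := (QuotientGroup.mk' (Subgroup.normalClosure (rels G))).comp Monoid.Coprod.inl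

/-- The canonical image of the copy `G^φ` in `ν(G)`; `ν₂ g` plays the role of `g^φ`. -/
def ν₂ : G →* nu G := (QuotientGroup.mk' (Subgroup.normalClosure (rels G))).comp Monoid.Coprod.inr

end Rocco

/-- Left-normed commutator `[x₁, x₂, …, x_r]` of a list of elements. -/
def leftNormed {H : Type*} [Group H] : List H → H
  | [] => 1
  | x :: xs => xs.foldl cm x

section Commutators

variable {H K : Type*} [Group H] [Group K]

theorem cj_one (a : H) : cj a 1 = a := by simp [cj]

theorem cj_mul (a b c : H) : cj (a * b) c = cj a c * cj b c := by simp [cj]; group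

theorem cj_inv (a b : H) : cj a⁻¹ b = (cj a b)⁻¹ := by simp [cj, mul_assoc]

theorem cj_inv_self (a : H) : cj a a⁻¹ = a := by simp [cj]

theorem cj_cj (a b c : H) : cj (cj a b) c = cj a (b * c) := by simp [cj, mul_assoc]

theorem cm_eq_inv_mul_cj (a b : H) : cm a b = a⁻¹ * cj a b := by simp [cm, cj, mul_assoc]

theorem cm_inv (a b : H) : (cm a b)⁻¹ = cm b a := by simp [cm]; group

theorem cm_inv_left (a b : H) : cm a⁻¹ b = (cj (cm a b) a⁻¹)⁻¹ := by simp [cm, cj]; group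

theorem cm_mul_left (a b c : H) : cm (a * b) c = cj (cm a c) b * cm b c := by
  simp [cm, cj]; group

theorem cm_mul_right (a b c : H) : cm a (b * c) = cm a c * cj (cm a b) c := by
  simp [cm, cj]; group

theorem map_cm (φ : H →* K) (a b : H) : φ (cm a b) = cm (φ a) (φ b) := by simp [cm]

theorem map_cj (φ : H →* K) (a b : H) : φ (cj a b) = cj (φ a) (φ b) := by simp [cj]

theorem mem_normalizer_iff_cj {S : Subgroup H} {g : H} :
    g ∈ Subgroup.normalizer (S : Set H) ↔ ∀ h, h ∈ S ↔ cj h g ∈ S :=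
  Subgroup.mem_normalizer_iff''

theorem cm_mem_of_mem {S : Subgroup H} [S.Normal] {n : H} (hn : n ∈ S) (u : H) : cm n u ∈ S := by
  rw [cm_eq_inv_mul_cj]
  exact mul_mem (inv_mem hn) (by simpa [cj] using Subgroup.Normal.conj_mem ‹_› n hn u⁻¹)

end Commutators

theorem Bool.not_mem_of_true_mem_cons_of_false_mem_cons {b : Bool} {l : List Bool}
    (ht : true ∈ b :: l) (hf : false ∈ b :: l) : (!b) ∈ l := by
  cases b <;> simp_all

theorem Bool.true_mem_ofFn_and_false_mem_ofFn {n : ℕ} {ε : Fin n → Bool}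
    (h₁ : ε ≠ fun _ => false) (h₂ : ε ≠ fun _ => true) :
    true ∈ List.ofFn ε ∧ false ∈ List.ofFn ε := by
  refine ⟨?_, ?_⟩ <;> by_contra h <;> simp_all [List.mem_ofFn, funext_iff]

namespace Rocco

variable {G : Type*} [Group G]

theorem mk'_eq_of_mul_inv_mem_rels {x y : Monoid.Coprod G G} (h : x * y⁻¹ ∈ rels G) :
    QuotientGroup.mk' (Subgroup.normalClosure (rels G)) x =
      QuotientGroup.mk' (Subgroup.normalClosure (rels G)) y := by
  rw [← mul_inv_eq_one, ← map_inv, ← map_mul, QuotientGroup.mk'_apply, QuotientGroup.eq_one_iff]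
  exact Subgroup.subset_normalClosure h

theorem cj_cm_ν₁ (a b c : G) :
    cj (cm (ν₁ G a) (ν₂ G b)) (ν₁ G c) = cm (ν₁ G (cj a c)) (ν₂ G (cj b c)) := by
  simpa only [ν₁, ν₂, MonoidHom.comp_apply, map_cj, map_cm] using
    mk'_eq_of_mul_inv_mem_rels ⟨a, b, c, Or.inl rfl⟩

theorem cj_cm_ν₂ (a b c : G) :
    cj (cm (ν₁ G a) (ν₂ G b)) (ν₂ G c) = cj (cm (ν₁ G a) (ν₂ G b)) (ν₁ G c) := by
  simpa only [ν₁, ν₂, MonoidHom.comp_apply, map_cj, map_cm] using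
    (mk'_eq_of_mul_inv_mem_rels ⟨a, b, c, Or.inr rfl⟩).symm

theorem nu_hom_ext {K : Type*} [Group K] {φ ψ : nu G →* K}
    (h₁ : φ.comp (ν₁ G) = ψ.comp (ν₁ G)) (h₂ : φ.comp (ν₂ G) = ψ.comp (ν₂ G)) : φ = ψ :=
  QuotientGroup.monoidHom_ext _ (Monoid.Coprod.hom_ext h₁ h₂)

theorem range_ν₁_sup_range_ν₂ : (ν₁ G).range ⊔ (ν₂ G).range = ⊤ := by
  rw [ν₁, ν₂, ← Monoid.Coprod.range_eq, QuotientGroup.range_mk']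

/-- The subgroup `[G, G^φ]` of `ν(G)`. -/
def crossComm (G : Type*) [Group G] : Subgroup (nu G) :=
  Subgroup.closure {n | ∃ a b : G, n = cm (ν₁ G a) (ν₂ G b)}

theorem cm_mem_crossComm (a b : G) : cm (ν₁ G a) (ν₂ G b) ∈ crossComm G :=
  Subgroup.subset_closure ⟨a, b, rfl⟩

theorem cm_ν₂_ν₁_mem_crossComm (a b : G) : cm (ν₂ G a) (ν₁ G b) ∈ crossComm G :=
  cm_inv (ν₁ G b) (ν₂ G a) ▸ inv_mem (cm_mem_crossComm b a)

theorem cj_ν₂_eq_cj_ν₁ {n : nu G} (hn : n ∈ crossComm G) (c : G) :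
    cj n (ν₂ G c) = cj n (ν₁ G c) := by
  induction hn using Subgroup.closure_induction with
  | mem _ h => obtain ⟨a, b, rfl⟩ := h; exact cj_cm_ν₂ a b c
  | one => simp [cj]
  | mul _ _ _ _ hx hy => rw [cj_mul, cj_mul, hx, hy]
  | inv _ _ hx => rw [cj_inv, cj_inv, hx]

theorem cj_ν₁_mem_crossComm {n : nu G} (hn : n ∈ crossComm G) (c : G) :
    cj n (ν₁ G c) ∈ crossComm G := by
  induction hn using Subgroup.closure_induction with
  | mem _ h => obtain ⟨a, b, rfl⟩ := h; rw [cj_cm_ν₁]; exact cm_mem_crossComm _ _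
  | one => simp [cj]
  | mul _ _ _ _ hx hy => rw [cj_mul]; exact mul_mem hx hy
  | inv _ _ hx => rw [cj_inv]; exact inv_mem hx

theorem ν₁_mem_normalizer (c : G) :
    ν₁ G c ∈ Subgroup.normalizer (crossComm G : Set (nu G)) := by
  refine mem_normalizer_iff_cj.mpr fun n => ⟨fun hn => cj_ν₁_mem_crossComm hn c, fun hn => ?_⟩
  have := cj_ν₁_mem_crossComm hn c⁻¹
  rwa [cj_cj, ← map_mul, mul_inv_cancel, map_one, cj_one] at this

theorem ν₂_mem_normalizer (c : G) :
    ν₂ G c ∈ Subgroup.normalizer (crossComm G : Set (nu G)) := by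
  refine mem_normalizer_iff_cj.mpr fun n => ⟨fun hn => ?_, fun hn => ?_⟩
  · exact (cj_ν₂_eq_cj_ν₁ hn c).symm ▸ cj_ν₁_mem_crossComm hn c
  · have := cj_ν₁_mem_crossComm hn c⁻¹
    rwa [← cj_ν₂_eq_cj_ν₁ hn, cj_cj, ← map_mul, mul_inv_cancel, map_one, cj_one] at this

instance : (crossComm G).Normal := by
  rw [← Subgroup.normalizer_eq_top_iff, eq_top_iff, ← range_ν₁_sup_range_ν₂]
  exact sup_le (by rintro _ ⟨c, rfl⟩; exact ν₁_mem_normalizer c)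
    (by rintro _ ⟨c, rfl⟩; exact ν₂_mem_normalizer c)

def proj (G : Type*) [Group G] : nu G →* G :=
  QuotientGroup.lift _ (Monoid.Coprod.lift (.id G) (.id G)) <| by
    refine Subgroup.normalClosure_le_normal ?_
    rintro _ ⟨a, b, c, rfl | rfl⟩ <;> simp [MonoidHom.mem_ker, cm, cj] <;> group

@[simp] theorem proj_ν₁ (a : G) : proj G (ν₁ G a) = a := rfl

@[simp] theorem proj_ν₂ (a : G) : proj G (ν₂ G a) = a := rfl

theorem conjNormal_eq_comp_proj :
    (MulAut.conjNormal : nu G →* MulAut (crossComm G)) =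
      MulAut.conjNormal.comp ((ν₁ G).comp (proj G)) := by
  refine nu_hom_ext rfl (MonoidHom.ext fun c => MulEquiv.ext fun n => Subtype.ext ?_)
  simpa [MulAut.conjNormal_apply, cj] using cj_ν₂_eq_cj_ν₁ n.2 c⁻¹

theorem cj_eq_cj_proj {n : nu G} (hn : n ∈ crossComm G) (u : nu G) :
    cj n u = cj n (ν₁ G (proj G u)) := by
  simpa [MulAut.conjNormal_apply, cj] using
    congrArg (fun φ => (φ u⁻¹ ⟨n, hn⟩ : nu G)) conjNormal_eq_comp_proj

theorem cm_eq_cm_proj {n : nu G} (hn : n ∈ crossComm G) (u : nu G) :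
    cm n u = cm n (ν₁ G (proj G u)) := by
  rw [cm_eq_inv_mul_cj, cm_eq_inv_mul_cj, cj_eq_cj_proj hn]

theorem foldl_cm_eq_proj {n : nu G} (hn : n ∈ crossComm G) (us : List (nu G)) :
    us.foldl cm n = (us.map fun u => ν₁ G (proj G u)).foldl cm n := by
  induction us generalizing n with
  | nil => rfl
  | cons u us ih =>
    simp only [List.foldl_cons, List.map_cons, ← cm_eq_cm_proj hn u]
    exact ih (cm_mem_of_mem hn u)

theorem cj_cm_eq_proj (a b : G) (u : nu G) :
    cj (cm (ν₁ G a) (ν₂ G b)) u = cm (ν₁ G (cj a (proj G u))) (ν₂ G (cj b (proj G u))) := by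
  rw [cj_eq_cj_proj (cm_mem_crossComm a b), cj_cm_ν₁]

theorem cm_ν₁_inv (a b : G) : cm (ν₁ G a⁻¹) (ν₂ G b) = (cm (ν₁ G a) (ν₂ G (cj b a⁻¹)))⁻¹ := by
  rw [map_inv, cm_inv_left, ← map_inv, cj_cm_ν₁, cj_inv_self]

theorem cm_ν₂_mul (x y z : G) :
    cm (ν₁ G x) (ν₂ G (y * z)) = cm (ν₁ G x) (ν₂ G z) * cm (ν₁ G (cj x z)) (ν₂ G (cj y z)) := by
  rw [map_mul, cm_mul_right, cj_cm_eq_proj, proj_ν₂]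

theorem cm_ν₂_mul' (x y z : G) :
    cm (ν₁ G x) (ν₂ G (y * z)) = cm (ν₁ G x) (ν₂ G y) * cm (ν₁ G (cj x y)) (ν₂ G z) := by
  rw [show y * z = cj z y⁻¹ * y by simp [cj], cm_ν₂_mul, cj_cj, inv_mul_cancel, cj_one]

/-- `[x, y, z^φ] = [x, y^φ, z]`: both sides equal `([x, z^φ]^{[x, y]})⁻¹ [x^y, z^φ]`. -/
theorem cm_ν₁_cm (x y z : G) :
    cm (ν₁ G (cm x y)) (ν₂ G z) = cm (cm (ν₁ G x) (ν₂ G y)) (ν₁ G z) := by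
  have lhs : cm (ν₁ G (cm x y)) (ν₂ G z) =
      (cm (ν₁ G (cj x (cm x y))) (ν₂ G (cj z (cm x y))))⁻¹ * cm (ν₁ G (cj x y)) (ν₂ G z) := by
    rw [cm_eq_inv_mul_cj x y, map_mul, cm_mul_left, cm_ν₁_inv, cj_inv, cj_cm_ν₁, cj_cj,
      ← cj_cj x x⁻¹, cj_inv_self]
  have rhs : cm (cm (ν₁ G x) (ν₂ G y)) (ν₁ G z) =
      (cm (ν₁ G (cj x (cm x y))) (ν₂ G (cj z (cm x y))))⁻¹ * cm (ν₁ G (cj x y)) (ν₂ G z) := by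
    have hconj : cm (ν₁ G (cj x (cm x y))) (ν₂ G (cj z (cm x y))) =
        cj (cm (ν₁ G x) (ν₂ G z)) (cm (ν₁ G x) (ν₂ G y)) := by
      rw [cj_cm_eq_proj, map_cm, proj_ν₁, proj_ν₂]
    have h := (cm_ν₂_mul x y z).symm.trans (cm_ν₂_mul' x y z)
    rw [cm_eq_inv_mul_cj, cj_cm_ν₁, hconj]
    calc _ = (cm (ν₁ G x) (ν₂ G y))⁻¹ * (cm (ν₁ G x) (ν₂ G z))⁻¹ *
          (cm (ν₁ G x) (ν₂ G z) * cm (ν₁ G (cj x z)) (ν₂ G (cj y z))) := by group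
      _ = _ := by rw [h]; simp only [cj]; group
  rw [lhs, rhs]

theorem cm_ν₁_cj (x y z : G) :
    cm (ν₁ G (cj x z)) (ν₂ G (cj y z)) = cm (ν₁ G x) (ν₂ G y) * cm (ν₁ G (cm x y)) (ν₂ G z) := by
  rw [cm_ν₁_cm, cm_eq_inv_mul_cj (cm (ν₁ G x) (ν₂ G y)), cj_cm_ν₁, mul_inv_cancel_left]

theorem cm_mul_cm_cj (x y z : G) :
    cm (ν₁ G (cj x z)) (ν₂ G (cj y z)) * cm (ν₁ G (cj y z)) (ν₂ G (cj x z)) =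
      cm (ν₁ G x) (ν₂ G y) * cm (ν₁ G y) (ν₂ G x) := by
  have hconj : cj (cm (ν₁ G (cm x y)) (ν₂ G z)) (cm (ν₁ G y) (ν₂ G x)) =
      cm (ν₁ G (cm x y)) (ν₂ G (cj z (cm x y)⁻¹)) := by
    rw [cj_cm_eq_proj, map_cm, proj_ν₁, proj_ν₂, ← cm_inv x y, cj_inv_self]
  have hcomm : cm (ν₁ G (cm x y)) (ν₂ G z) * cm (ν₁ G y) (ν₂ G x) =
      cm (ν₁ G y) (ν₂ G x) * cm (ν₁ G (cm x y)) (ν₂ G (cj z (cm x y)⁻¹)) := by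
    rw [← hconj, cj]; group
  rw [cm_ν₁_cj x y, cm_ν₁_cj y x, ← cm_inv x y, cm_ν₁_inv]
  calc _ = cm (ν₁ G x) (ν₂ G y) * (cm (ν₁ G (cm x y)) (ν₂ G z) * cm (ν₁ G y) (ν₂ G x)) *
        (cm (ν₁ G (cm x y)) (ν₂ G (cj z (cm x y)⁻¹)))⁻¹ := by group
    _ = _ := by rw [hcomm]; group

theorem cm_cm_ν₂_ν₁ (x y z : G) :
    cm (cm (ν₂ G x) (ν₁ G y)) (ν₁ G z) = cm (cm (ν₁ G x) (ν₂ G y)) (ν₁ G z) := by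
  rw [← cm_inv (ν₁ G y), cm_eq_inv_mul_cj (cm (ν₁ G y) (ν₂ G x))⁻¹, inv_inv, cj_inv, cj_cm_ν₁,
    cm_eq_inv_mul_cj (cm (ν₁ G x) (ν₂ G y)), cj_cm_ν₁, eq_inv_mul_iff_mul_eq, ← mul_assoc,
    mul_inv_eq_iff_eq_mul, cm_mul_cm_cj]

def swap (G : Type*) [Group G] : nu G →* nu G :=
  QuotientGroup.map _ _ (Monoid.Coprod.swap G G) <| by
    have hrel (a b c : G) :
        cj (cm (ν₂ G a) (ν₁ G b)) (ν₂ G c) = cj (cm (ν₂ G a) (ν₁ G b)) (ν₁ G c) ∧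
          cj (cm (ν₂ G a) (ν₁ G b)) (ν₁ G c) = cm (cj (ν₂ G a) (ν₂ G c)) (cj (ν₁ G b) (ν₁ G c)) :=
      ⟨cj_ν₂_eq_cj_ν₁ (cm_ν₂_ν₁_mem_crossComm a b) c,
        by rw [← cm_inv, cj_inv, cj_cm_ν₁, cm_inv, map_cj, map_cj]⟩
    refine Subgroup.normalClosure_le_normal ?_
    rintro _ ⟨a, b, c, rfl | rfl⟩ <;>
      rw [SetLike.mem_coe, Subgroup.mem_comap, ← QuotientGroup.eq_one_iff,
        ← QuotientGroup.mk'_apply] <;>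
      simp only [map_mul, map_inv, map_cj, map_cm, Monoid.Coprod.swap_inl, Monoid.Coprod.swap_inr,
        mul_inv_eq_one]
    exacts [(hrel a b c).1.trans (hrel a b c).2, (hrel a b c).1]

@[simp] theorem swap_ν₁ (a : G) : swap G (ν₁ G a) = ν₂ G a := rfl

@[simp] theorem swap_ν₂ (a : G) : swap G (ν₂ G a) = ν₁ G a := rfl

theorem swap_cm_cm (x y z : G) :
    swap G (cm (cm (ν₁ G x) (ν₂ G y)) (ν₁ G z)) = cm (cm (ν₁ G x) (ν₂ G y)) (ν₁ G z) := by
  rw [map_cm, map_cm, swap_ν₁, swap_ν₂, swap_ν₁, cm_eq_cm_proj (cm_ν₂_ν₁_mem_crossComm x y),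
    proj_ν₂, cm_cm_ν₂_ν₁]

def incl (G : Type*) [Group G] (b : Bool) : G →* nu G := if b then ν₂ G else ν₁ G

@[simp] theorem incl_false : incl G false = ν₁ G := rfl

@[simp] theorem incl_true : incl G true = ν₂ G := rfl

theorem incl_apply (b : Bool) (x : G) : incl G b x = if b then ν₂ G x else ν₁ G x := by
  cases b <;> rfl

@[simp] theorem proj_incl (b : Bool) (x : G) : proj G (incl G b x) = x := by cases b <;> rfl

theorem swap_incl (b : Bool) (x : G) : swap G (incl G b x) = incl G (!b) x := by cases b <;> rfl

theorem cm_cm_incl_false {c d : Bool} (h : c = true ∨ d = true) (x y z : G) :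
    cm (cm (incl G false x) (incl G c y)) (incl G d z) = cm (cm (ν₁ G x) (ν₂ G y)) (ν₁ G z) := by
  cases c <;> cases d <;> simp only [incl_false, incl_true]
  · simp at h
  · rw [← map_cm, cm_ν₁_cm]
  · rw [cm_eq_cm_proj (cm_mem_crossComm x y), proj_ν₂]

theorem cm_cm_incl {b c d : Bool} (h : ¬(b = c ∧ c = d)) (x y z : G) :
    cm (cm (incl G b x) (incl G c y)) (incl G d z) = cm (cm (ν₁ G x) (ν₂ G y)) (ν₁ G z) := by
  cases b
  · exact cm_cm_incl_false (by cases c <;> cases d <;> simp_all) x y z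
  · calc _ = swap G (cm (cm (incl G false x) (incl G (!c) y)) (incl G (!d) z)) := by
          simp only [map_cm, swap_incl, Bool.not_not, Bool.not_false]
      _ = _ := by rw [cm_cm_incl_false (by cases c <;> cases d <;> simp_all), swap_cm_cm]

theorem leftNormed_map_incl_of_mixed {b c d : Bool} (h : ¬(b = c ∧ c = d)) (x y z : G)
    (p : List (Bool × G)) :
    leftNormed (((b, x) :: (c, y) :: (d, z) :: p).map fun e => incl G e.1 e.2) =
      (p.map fun e => ν₁ G e.2).foldl cm (cm (cm (ν₁ G x) (ν₂ G y)) (ν₁ G z)) := by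
  simp only [List.map_cons, leftNormed, List.foldl_cons]
  rw [cm_cm_incl h, foldl_cm_eq_proj (cm_mem_of_mem (cm_mem_crossComm x y) _), List.map_map]
  simp only [Function.comp_def, proj_incl]

theorem leftNormed_map_incl {b c d : Bool} (x y z : G) (p : List (Bool × G))
    (hmix : (!b) ∈ c :: d :: p.map Prod.fst) :
    leftNormed (((b, x) :: (c, y) :: (d, z) :: p).map fun e => incl G e.1 e.2) =
      (p.map fun e => ν₁ G e.2).foldl cm (cm (cm (ν₁ G x) (ν₂ G y)) (ν₁ G z)) := by
  induction p generalizing x y z c d with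
  | nil =>
    exact leftNormed_map_incl_of_mixed (by cases b <;> cases c <;> cases d <;> simp_all) x y z []
  | cons e p ih =>
    by_cases h : b = c ∧ c = d
    · obtain ⟨rfl, rfl⟩ := h
      have := ih (c := b) (d := e.1) (cm x y) z e.2 (by simpa using hmix)
      simp only [List.map_cons, leftNormed, List.foldl_cons, ← map_cm] at this ⊢
      rw [this, cm_ν₁_cm]
    · exact leftNormed_map_incl_of_mixed h x y z _

theorem leftNormed_map_incl_eq {q q' : List (Bool × G)} (hsnd : q.map Prod.snd = q'.map Prod.snd)
    (hlen : 3 ≤ q.length) (hq : true ∈ q.map Prod.fst ∧ false ∈ q.map Prod.fst)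
    (hq' : true ∈ q'.map Prod.fst ∧ false ∈ q'.map Prod.fst) :
    leftNormed (q.map fun e => incl G e.1 e.2) = leftNormed (q'.map fun e => incl G e.1 e.2) := by
  have hlen' : 3 ≤ q'.length := by rwa [← List.length_map Prod.snd, ← hsnd, List.length_map]
  match q, q', hlen, hlen' with
  | (b, x) :: (c, y) :: (d, z) :: p, (b', x') :: (c', y') :: (d', z') :: p', _, _ =>
    simp only [List.map_cons, List.cons.injEq] at hsnd hq hq'
    obtain ⟨rfl, rfl, rfl, hp⟩ := hsnd
    have hp' : (p.map fun e => ν₁ G e.2) = p'.map fun e => ν₁ G e.2 := by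
      simpa only [List.map_map, Function.comp_def] using congrArg (List.map (ν₁ G)) hp
    rw [leftNormed_map_incl x y z p (Bool.not_mem_of_true_mem_cons_of_false_mem_cons hq.1 hq.2),
      leftNormed_map_incl x y z p' (Bool.not_mem_of_true_mem_cons_of_false_mem_cons hq'.1 hq'.2),
      hp']

end Rocco

open Rocco in
/-- Any two mixed decorations (neither all `1` nor all `φ`) of a left-normed commutator of
length `r ≥ 3` agree in `ν(G)`.  Here `ε i = true` means the letter `g i` carries `φ`. -/
theorem leftNormed_mixed_eq {G : Type*} [Group G] {r : ℕ} (hr : 3 ≤ r)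
    (ε δ : Fin r → Bool)
    (hε₁ : ε ≠ fun _ => false) (hε₂ : ε ≠ fun _ => true)
    (hδ₁ : δ ≠ fun _ => false) (hδ₂ : δ ≠ fun _ => true)
    (g : Fin r → G) :
    leftNormed (List.ofFn fun i => if ε i then ν₂ G (g i) else ν₁ G (g i)) =
      leftNormed (List.ofFn fun i => if δ i then ν₂ G (g i) else ν₁ G (g i)) := by
  have hdecorate (ε : Fin r → Bool) :
      (List.ofFn fun i => if ε i then ν₂ G (g i) else ν₁ G (g i)) =
        (List.ofFn fun i => (ε i, g i)).map fun e => incl G e.1 e.2 := by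
    simp [List.map_ofFn, Function.comp_def, incl_apply]
  rw [hdecorate, hdecorate]
  refine leftNormed_map_incl_eq (by simp [List.map_ofFn, Function.comp_def]) (by simpa using hr)
    ?_ ?_
  · simpa [List.map_ofFn, Function.comp_def] using Bool.true_mem_ofFn_and_false_mem_ofFn hε₁ hε₂
  · simpa [List.map_ofFn, Function.comp_def] using Bool.true_mem_ofFn_and_false_mem_ofFn hδ₁ hδ₂
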